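/- Let X be a real Hilbert space and suppose U, V ⊂ X are closed linear subspaces such that U ∩ V = {0} and U + V is closed. Let {A_n} and {B_n} be sequences of nonempty closed convex subsets of X such that A_n → U and B_n → V in the Attouch-Wets sense. Then for every starting point a₀ ∈ X, the corresponding perturbed alternating projections sequences {a_n} and {b_n} converge to 0 in norm. -/

import Mathlib

open Filter Metric Topology

/-- Attouch–Wets convergence of a sequence of sets:
for every `N`, `sup_{‖x‖ ≤ N} |dist(x, Aₙ) − dist(x, L)| → 0`. -/
def AWTendsto {X : Type*} [NormedAddCommGroup X] (A : ℕ → Set X) (L : Set X) : Prop :=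
  ∀ N : ℕ, ∀ ε : ℝ, 0 < ε → ∃ n₀ : ℕ, ∀ n ≥ n₀, ∀ x : X, ‖x‖ ≤ (N : ℝ) →
    |Metric.infDist x (A n) - Metric.infDist x L| < ε

/-- `p` is a metric projection (nearest point) of `x` onto `K`. -/
def IsProjOn {X : Type*} [NormedAddCommGroup X] (K : Set X) (x p : X) : Prop :=
  p ∈ K ∧ ∀ y ∈ K, dist x p ≤ dist x y

/-- `a`, `b` are the perturbed alternating projections sequences w.r.t. `A`, `B`
with starting point `a₀`: `bₙ = P_{Bₙ}(a_{n−1})` and `aₙ = P_{Aₙ}(bₙ)` for `n ≥ 1`. -/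
def IsPerturbedAPS {X : Type*} [NormedAddCommGroup X]
    (A B : ℕ → Set X) (a₀ : X) (a b : ℕ → X) : Prop :=
  a 0 = a₀ ∧ ∀ n : ℕ,
    IsProjOn (B (n + 1)) (a n) (b (n + 1)) ∧ IsProjOn (A (n + 1)) (b (n + 1)) (a (n + 1))

/-!
Since `U ∩ V = 0` and `U + V` is closed, the open mapping theorem gives `‖u‖ ≤ C ‖u + v‖` on
`U × V`, so `⟪u, v⟫ ≤ c ‖u‖ ‖v‖` for some `c < 1`. By convexity, Attouch–Wets convergence
upgrades to a scale-invariant statement: for large `n`, every `x ∈ Aₙ` lies within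
`ε (1 + ‖x‖)` of `U` (and likewise for `Bₙ`, `V`), and `Aₙ`, `Bₙ` meet the `ε`-ball.
Together with the variational inequality of the metric projection this yields
`‖P x‖ ≤ (c + δ) ‖x‖ + δ` for each projection step, eventually in `n` and for every `δ > 0`,
and such a recursion forces the norms of the iterates to tend to `0`.
-/

open scoped RealInnerProductSpace

theorem exists_norm_le_mul_norm_add {E : Type*} [NormedAddCommGroup E] [NormedSpace ℝ E]
    [CompleteSpace E] {U V : Submodule ℝ E} (hU : IsClosed (U : Set E))
    (hV : IsClosed (V : Set E)) (hUV : Disjoint U V)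
    (hsum : IsClosed ((U ⊔ V : Submodule ℝ E) : Set E)) :
    ∃ C, 1 ≤ C ∧ ∀ u ∈ U, ∀ v ∈ V, ‖u‖ ≤ C * ‖u + v‖ := by
  have := hU.completeSpace_coe
  have := hV.completeSpace_coe
  let f : U × V →L[ℝ] E := U.subtypeL.coprod V.subtypeL
  have hinj : Function.Injective f := by
    rw [← ContinuousLinearMap.coe_coe, ← LinearMap.ker_eq_bot, ContinuousLinearMap.coe_coprod,
      LinearMap.ker_coprod_of_disjoint_range] <;> simp [hUV]
  have hrange : Set.range f = (U ⊔ V : Submodule ℝ E) := by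
    rw [Submodule.sup_eq_range]; rfl
  obtain ⟨K, hK⟩ := f.antilipschitz_of_injective_of_isClosed_range hinj (hrange ▸ hsum)
  refine ⟨max K 1, le_max_right _ _, fun u hu v hv => ?_⟩
  have h := hK.le_mul_norm_sub 0 (⟨u, hu⟩, ⟨v, hv⟩)
  simp only [neg_zero, zero_add, map_zero] at h
  calc ‖u‖ ≤ ‖((⟨u, hu⟩ : U), (⟨v, hv⟩ : V))‖ := le_max_left _ _
    _ ≤ K * ‖u + v‖ := h
    _ ≤ max K 1 * ‖u + v‖ := by gcongr; exact le_max_left _ _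

section ConicallyClose

variable {E : Type*} [NormedAddCommGroup E]

def IsConicallyClose (A W : Set E) (ε : ℝ) : Prop :=
  (∃ z ∈ A, ‖z‖ ≤ ε) ∧ ∀ x ∈ A, ∃ w ∈ W, ‖x - w‖ ≤ ε * (1 + ‖x‖)

theorem IsConicallyClose.mono {A W : Set E} {ε ε' : ℝ} (h : IsConicallyClose A W ε)
    (hε : ε ≤ ε') : IsConicallyClose A W ε' := by
  obtain ⟨⟨z, hzA, hz⟩, hclose⟩ := h
  refine ⟨⟨z, hzA, hz.trans hε⟩, fun x hx => ?_⟩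
  obtain ⟨w, hwW, hw⟩ := hclose x hx
  exact ⟨w, hwW, hw.trans (by gcongr)⟩

variable [NormedSpace ℝ E]

theorem exists_dist_lt_of_abs_infDist_sub_lt {α : Type*} [PseudoMetricSpace α] {s t : Set α}
    {y : α} {r : ℝ} (hs : s.Nonempty) (hy : y ∈ t) (h : |infDist y s - infDist y t| < r) :
    ∃ z ∈ s, dist y z < r := by
  rw [infDist_zero_of_mem hy, sub_zero, abs_of_nonneg infDist_nonneg] at h
  exact (infDist_lt_iff hs).1 h

theorem isConicallyClose_of_abs_infDist_sub_lt {A : Set E} (W : Submodule ℝ E)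
    (hA : Convex ℝ A) (hne : A.Nonempty) {ε : ℝ} (hε : ε ≤ 2)
    (hAW : ∀ y : E, ‖y‖ ≤ 2 → |infDist y A - infDist y (W : Set E)| < ε / 2) :
    IsConicallyClose A W ε := by
  obtain ⟨z, hzA, hz⟩ := exists_dist_lt_of_abs_infDist_sub_lt hne W.zero_mem (hAW 0 (by simp))
  rw [dist_zero_left] at hz
  refine ⟨⟨z, hzA, by linarith [norm_nonneg z]⟩, fun x hx => ?_⟩
  -- Shrink `x` towards the small point `z` into the ball of radius 2, approximate it by `W`
  -- there, and scale back by `s = 1 + ‖x‖`.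
  set s := 1 + ‖x‖
  have hs : 0 < s := by positivity
  set y := (‖x‖ / s) • z + (1 / s) • x
  have hyA : y ∈ A := hA hzA hx (by positivity) (by positivity) (by field_simp; ring)
  have hsy : s • y = ‖x‖ • z + x := by
    simp only [y, smul_add, smul_smul]
    field_simp
    rw [one_smul]
  have hy : ‖y‖ ≤ 2 := calc
    ‖y‖ ≤ ‖x‖ / s * ‖z‖ + 1 / s * ‖x‖ := by
      refine (norm_add_le _ _).trans_eq ?_
      rw [norm_smul, norm_smul, Real.norm_of_nonneg (by positivity),
        Real.norm_of_nonneg (by positivity)]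
    _ = ‖x‖ / s * (‖z‖ + 1) := by ring
    _ ≤ 1 * (1 + 1) := by
      gcongr
      · exact (div_le_one hs).2 (by linarith)
      · linarith
    _ = 2 := by norm_num
  obtain ⟨w, hwW, hw⟩ := exists_dist_lt_of_abs_infDist_sub_lt ⟨0, W.zero_mem⟩ hyA
    (by rw [abs_sub_comm]; exact hAW y hy)
  rw [dist_eq_norm] at hw
  refine ⟨s • w, W.smul_mem s hwW, ?_⟩
  have hdecomp : x - s • w = s • (y - w) - ‖x‖ • z := by
    rw [smul_sub, hsy]; abel
  calc ‖x - s • w‖ ≤ s * ‖y - w‖ + ‖x‖ * ‖z‖ := by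
        rw [hdecomp]
        refine (norm_sub_le _ _).trans_eq ?_
        rw [norm_smul, norm_smul, Real.norm_of_nonneg hs.le, norm_norm]
    _ ≤ s * (ε / 2) + s * (ε / 2) := by
        gcongr
        linarith
    _ = ε * (1 + ‖x‖) := by ring

theorem AWTendsto.eventually_isConicallyClose {A : ℕ → Set E} {W : Submodule ℝ E}
    (h : AWTendsto A W) (hA : ∀ n, Convex ℝ (A n)) (hne : ∀ n, (A n).Nonempty) {ε : ℝ}
    (hε : 0 < ε) : ∀ᶠ n in atTop, IsConicallyClose (A n) W ε := by
  obtain ⟨n₀, hn₀⟩ := h 2 (min ε 2 / 2) (by positivity)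
  filter_upwards [eventually_ge_atTop n₀] with n hn
  exact (isConicallyClose_of_abs_infDist_sub_lt W (hA n) (hne n) (min_le_right ε 2)
    fun y hy => hn₀ n hn y (by exact_mod_cast hy)).mono (min_le_left _ _)

end ConicallyClose

theorem le_add_of_sq_le_mul_add {c δ R P : ℝ} (hc : 0 ≤ c) (hδ0 : 0 < δ) (hδ1 : δ ≤ 1)
    (hR : 0 ≤ R) (h : P ^ 2 ≤ c * R * P + δ ^ 2 / 2 * ((1 + R) * (1 + P))) :
    P ≤ (c + δ) * R + δ := by
  by_contra! hlt
  have hδP : δ < P := by nlinarith [mul_nonneg (hc.trans (le_add_of_nonneg_right hδ0.le)) hR]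
  have hgap : δ * (1 + R) < P - c * R := by linarith
  have hδ2 : δ ^ 2 * (1 + P) ≤ 2 * δ * P := by
    nlinarith [mul_le_mul_of_nonneg_left hδP.le hδ0.le,
      mul_le_mul_of_nonneg_right hδ1 (mul_nonneg hδ0.le (hδ0.trans hδP).le)]
  nlinarith [mul_lt_mul_of_pos_left hgap (hδ0.trans hδP)]

section InnerProductSpace

variable {X : Type*} [NormedAddCommGroup X] [InnerProductSpace ℝ X]

theorem real_inner_le_of_norm_le_mul_norm_add {U V : Submodule ℝ X} {C : ℝ} (hC1 : 1 ≤ C)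
    (hC : ∀ u ∈ U, ∀ v ∈ V, ‖u‖ ≤ C * ‖u + v‖) {u v : X} (hu : u ∈ U) (hv : v ∈ V) :
    ⟪u, v⟫ ≤ (1 - 1 / (2 * C ^ 2)) * (‖u‖ * ‖v‖) := by
  set s := ‖u‖ * ‖v‖
  have hnorm : ‖‖v‖ • u‖ = s := by rw [norm_smul, norm_norm, mul_comm]
  have hsub : ‖‖v‖ • u - ‖u‖ • v‖ ^ 2 = 2 * s ^ 2 - 2 * s * ⟪u, v⟫ := by
    rw [norm_sub_sq_real, hnorm, norm_smul, norm_norm, real_inner_smul_left,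
      real_inner_smul_right]
    ring
  have hbound : s ^ 2 ≤ C ^ 2 * (2 * s ^ 2 - 2 * s * ⟪u, v⟫) := by
    have h := hC (‖v‖ • u) (U.smul_mem _ hu) (-(‖u‖ • v)) (V.neg_mem (V.smul_mem _ hv))
    rw [← sub_eq_add_neg, hnorm] at h
    rw [← hsub, ← mul_pow]
    exact pow_le_pow_left₀ (by positivity) h 2
  have hCS : ⟪u, v⟫ ≤ s := real_inner_le_norm u v
  have key : 2 * C ^ 2 * ⟪u, v⟫ ≤ (2 * C ^ 2 - 1) * s := by
    rcases (by positivity : 0 ≤ s).eq_or_lt with hs | hs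
    · rw [← hs] at hCS ⊢; nlinarith
    · exact le_of_mul_le_mul_right (by nlinarith) hs
  have hC2 : 0 < 2 * C ^ 2 := by positivity
  rw [← mul_le_mul_iff_of_pos_left hC2]
  calc 2 * C ^ 2 * ⟪u, v⟫ ≤ (2 * C ^ 2 - 1) * s := key
    _ = 2 * C ^ 2 * ((1 - 1 / (2 * C ^ 2)) * s) := by field_simp

theorem exists_real_inner_le_mul_norm_mul_norm [CompleteSpace X] {U V : Submodule ℝ X}
    (hU : IsClosed (U : Set X)) (hV : IsClosed (V : Set X)) (hUV : Disjoint U V)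
    (hsum : IsClosed ((U ⊔ V : Submodule ℝ X) : Set X)) :
    ∃ c, 0 ≤ c ∧ c < 1 ∧ ∀ u ∈ U, ∀ v ∈ V, ⟪u, v⟫ ≤ c * (‖u‖ * ‖v‖) := by
  obtain ⟨C, hC1, hC⟩ := exists_norm_le_mul_norm_add hU hV hUV hsum
  have h0 : 0 < 1 / (2 * C ^ 2) := by positivity
  have h1 : 1 / (2 * C ^ 2) ≤ 1 / 2 := by gcongr; nlinarith
  exact ⟨1 - 1 / (2 * C ^ 2), by linarith, by linarith,
    fun u hu v hv => real_inner_le_of_norm_le_mul_norm_add hC1 hC hu hv⟩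

theorem IsProjOn.real_inner_sub_le_zero {K : Set X} (hK : Convex ℝ K) {x p : X}
    (h : IsProjOn K x p) {z : X} (hz : z ∈ K) : ⟪x - p, z - p⟫ ≤ 0 := by
  have : Nonempty K := ⟨⟨p, h.1⟩⟩
  refine (norm_eq_iInf_iff_real_inner_le_zero hK h.1).1 (le_antisymm ?_ ?_) z hz
  · exact le_ciInf fun w => by simpa [dist_eq_norm] using h.2 w w.2
  · exact ciInf_le ⟨0, by rintro r ⟨w, rfl⟩; positivity⟩ (⟨p, h.1⟩ : K)

theorem IsProjOn.norm_sq_le {K : Set X} (hK : Convex ℝ K) {x p : X} (h : IsProjOn K x p)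
    {z : X} (hz : z ∈ K) : ‖p‖ ^ 2 ≤ ⟪x, p⟫ + ‖z‖ * (‖x‖ + ‖z‖) := by
  have hvi := h.real_inner_sub_le_zero hK hz
  have hxp : ‖x - p‖ ≤ ‖x‖ + ‖z‖ := by
    rw [← dist_eq_norm]
    exact (h.2 z hz).trans (dist_eq_norm x z ▸ norm_sub_le x z)
  have hCS : -⟪x - p, z⟫ ≤ ‖x - p‖ * ‖z‖ := by
    rw [← inner_neg_right, ← norm_neg z]; exact real_inner_le_norm _ _
  rw [inner_sub_right, inner_sub_left _ _ p, real_inner_self_eq_norm_sq] at hvi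
  nlinarith [norm_nonneg z]

theorem real_inner_le_of_norm_sub_le {x y u v : X} {c ε : ℝ} (hc0 : 0 ≤ c) (hc1 : c ≤ 1)
    (hε0 : 0 ≤ ε) (hε1 : ε ≤ 1) (huv : ⟪u, v⟫ ≤ c * (‖u‖ * ‖v‖))
    (hxu : ‖x - u‖ ≤ ε * (1 + ‖x‖)) (hyv : ‖y - v‖ ≤ ε * (1 + ‖y‖)) :
    ⟪x, y⟫ ≤ c * (‖x‖ * ‖y‖) + 6 * ε * ((1 + ‖x‖) * (1 + ‖y‖)) := by
  have hsplit : ⟪x, y⟫ = ⟪u, v⟫ + ⟪x - u, y⟫ + ⟪u, y - v⟫ := by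
    rw [inner_sub_left, inner_sub_right]; ring
  have h1 : ⟪x - u, y⟫ ≤ ‖x - u‖ * ‖y‖ := real_inner_le_norm _ _
  have h2 : ⟪u, y - v⟫ ≤ ‖u‖ * ‖y - v‖ := real_inner_le_norm _ _
  have hu : ‖u‖ ≤ ‖x‖ + ε * (1 + ‖x‖) := by
    linarith [norm_sub_norm_le u x, norm_sub_rev x u]
  have hv : ‖v‖ ≤ ‖y‖ + ε * (1 + ‖y‖) := by
    linarith [norm_sub_norm_le v y, norm_sub_rev y v]
  have hx := norm_nonneg x
  have hy := norm_nonneg y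
  have huv' : c * (‖u‖ * ‖v‖) ≤ c * ((‖x‖ + ε * (1 + ‖x‖)) * (‖y‖ + ε * (1 + ‖y‖))) := by
    gcongr
  nlinarith [mul_le_mul hxu le_rfl hy (by positivity), mul_le_mul hu hyv (norm_nonneg _)
    (by positivity), mul_nonneg hε0 hx, mul_nonneg hε0 hy, mul_nonneg (mul_nonneg hε0 hx) hy,
    mul_nonneg hε0 hε0, mul_nonneg (mul_nonneg hε0 hε0) hx, mul_nonneg (mul_nonneg hε0 hε0) hy,
    mul_nonneg (mul_nonneg (mul_nonneg hε0 hε0) hx) hy, mul_nonneg (sub_nonneg.2 hc1) hε0]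

-- The tolerance `δ² / 14` makes the error `6 ε + ε` of the two estimates above equal `δ² / 2`.
theorem IsProjOn.norm_le_of_isConicallyClose {W₁ W₂ A K : Set X} {c δ : ℝ} (hc0 : 0 ≤ c)
    (hc1 : c ≤ 1) (hδ0 : 0 < δ) (hδ1 : δ ≤ 1)
    (hang : ∀ u ∈ W₁, ∀ v ∈ W₂, ⟪u, v⟫ ≤ c * (‖u‖ * ‖v‖))
    (hA : IsConicallyClose A W₁ (δ ^ 2 / 14)) (hK : IsConicallyClose K W₂ (δ ^ 2 / 14))
    (hKc : Convex ℝ K) {x p : X} (hx : x ∈ A) (hp : IsProjOn K x p) :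
    ‖p‖ ≤ (c + δ) * ‖x‖ + δ := by
  have hε0 : 0 ≤ δ ^ 2 / 14 := by positivity
  have hε1 : δ ^ 2 / 14 ≤ 1 := by nlinarith
  obtain ⟨u, hu, hxu⟩ := hA.2 x hx
  obtain ⟨v, hv, hpv⟩ := hK.2 p hp.1
  obtain ⟨z, hzK, hz⟩ := hK.1
  have hinner := real_inner_le_of_norm_sub_le hc0 hc1 hε0 hε1 (hang u hu v hv) hxu hpv
  have hproj := hp.norm_sq_le hKc hzK
  have hzx : ‖z‖ * (‖x‖ + ‖z‖) ≤ δ ^ 2 / 14 * ((1 + ‖x‖) * (1 + ‖p‖)) :=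
    calc ‖z‖ * (‖x‖ + ‖z‖) ≤ δ ^ 2 / 14 * ((1 + ‖x‖) * 1) := by
          rw [mul_one, add_comm 1]; gcongr; linarith
      _ ≤ δ ^ 2 / 14 * ((1 + ‖x‖) * (1 + ‖p‖)) := by gcongr; linarith [norm_nonneg p]
  refine le_add_of_sq_le_mul_add hc0 hδ0 hδ1 (norm_nonneg x) ?_
  linarith

end InnerProductSpace

theorem tendsto_zero_of_eventually_le_mul_add {t : ℕ → ℝ} {c : ℝ} (ht : ∀ n, 0 ≤ t n)
    (hc0 : 0 ≤ c) (hc1 : c < 1)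
    (h : ∀ᶠ δ in 𝓝[>] 0, ∀ᶠ n in atTop, t (n + 1) ≤ (c + δ) * t n + δ) :
    Tendsto t atTop (𝓝 0) := by
  refine tendsto_order.2 ⟨fun a ha => .of_forall fun n => ha.trans_le (ht n), fun ε hε => ?_⟩
  obtain ⟨δ, hδ, hδ0, hδε⟩ := (h.and (Ioo_mem_nhdsGT (show 0 < min ((1 - c) / 2)
    ((1 - c) * ε / 4) by have := sub_pos.2 hc1; positivity))).exists
  have hδ1 := hδε.trans_le (min_le_left _ _)
  have hδ2 := hδε.trans_le (min_le_right _ _)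
  set q := c + δ
  have hq0 : 0 ≤ q := by positivity
  have hq1 : 0 < 1 - q := by linarith
  -- `r` is the fixed point of `τ ↦ q τ + δ`.
  set r := δ / (1 - q)
  have hr : q * r + δ = r := by simp only [r]; field_simp; ring
  have hrε : r < ε / 2 := by
    rw [div_lt_iff₀ hq1]; nlinarith
  obtain ⟨N, hN⟩ := eventually_atTop.1 hδ
  have hgeom : ∀ k, t (N + k) ≤ q ^ k * t N + r := by
    intro k
    induction k with
    | zero => simp only [add_zero, pow_zero, one_mul, le_add_iff_nonneg_right]; positivity
    | succ k ih =>
      calc t (N + (k + 1)) ≤ q * t (N + k) + δ := hN (N + k) (Nat.le_add_right _ _)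
        _ ≤ q * (q ^ k * t N + r) + δ := by gcongr
        _ = q ^ (k + 1) * t N + r := by linear_combination hr
  have hpow : Tendsto (fun k => q ^ k * t N) atTop (𝓝 0) := by
    simpa using (tendsto_pow_atTop_nhds_zero_of_lt_one hq0 (by linarith)).mul_const (t N)
  obtain ⟨K, hK⟩ := eventually_atTop.1 (hpow.eventually (gt_mem_nhds (half_pos hε)))
  filter_upwards [eventually_ge_atTop (N + K)] with n hn
  obtain ⟨k, rfl⟩ := Nat.exists_eq_add_of_le (le_of_add_le_left hn)
  linarith [hgeom k, hK k (by omega)]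

theorem tendsto_zero_of_eventually_le_mul_add_of_le_mul_add {f g : ℕ → ℝ} {c : ℝ}
    (hf : ∀ n, 0 ≤ f n) (hc0 : 0 ≤ c) (hc1 : c < 1)
    (h : ∀ᶠ δ in 𝓝[>] 0, ∀ᶠ n in atTop, g n ≤ (c + δ) * f n + δ ∧ f (n + 1) ≤ (c + δ) * g n + δ) :
    Tendsto f atTop (𝓝 0) := by
  refine tendsto_zero_of_eventually_le_mul_add hf hc0 hc1 ?_
  have hthird : Tendsto (fun δ : ℝ => δ / 3) (𝓝[>] 0) (𝓝[>] 0) :=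
    tendsto_nhdsWithin_iff.2
      ⟨by simpa using ((continuous_id.div_const (3 : ℝ)).tendsto 0).mono_left nhdsWithin_le_nhds,
        eventually_nhdsWithin_of_forall fun _ hx => div_pos (Set.mem_Ioi.1 hx) three_pos⟩
  filter_upwards [hthird.eventually h, Ioc_mem_nhdsGT one_pos] with δ hδ ⟨hδ0, hδ1⟩
  filter_upwards [hδ] with n ⟨hgf, hfg⟩
  have hq : (c + δ / 3) ^ 2 ≤ c + δ := by nlinarith
  calc f (n + 1) ≤ (c + δ / 3) * ((c + δ / 3) * f n + δ / 3) + δ / 3 := by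
        refine hfg.trans ?_; gcongr
    _ = (c + δ / 3) ^ 2 * f n + ((c + δ / 3) * (δ / 3) + δ / 3) := by ring
    _ ≤ (c + δ) * f n + δ := by
        gcongr
        · exact hf n
        · nlinarith

theorem tendsto_zero_of_eventually_alternating {s t : ℕ → ℝ} {c : ℝ}
    (hs : ∀ n, 0 ≤ s n) (ht : ∀ n, 0 ≤ t n) (hc0 : 0 ≤ c) (hc1 : c < 1)
    (h : ∀ᶠ δ in 𝓝[>] 0, ∀ᶠ n in atTop, t n ≤ (c + δ) * s n + δ ∧ s (n + 1) ≤ (c + δ) * t n + δ) :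
    Tendsto s atTop (𝓝 0) ∧ Tendsto t atTop (𝓝 0) := by
  refine ⟨tendsto_zero_of_eventually_le_mul_add_of_le_mul_add hs hc0 hc1 h,
    tendsto_zero_of_eventually_le_mul_add_of_le_mul_add (g := fun n => s (n + 1)) ht hc0 hc1 ?_⟩
  filter_upwards [h] with δ hδ
  filter_upwards [hδ, (tendsto_add_atTop_nat 1).eventually hδ] with n hn hn'
  exact ⟨hn.2, hn'.1⟩

theorem stmt5 {X : Type*} [NormedAddCommGroup X] [InnerProductSpace ℝ X] [CompleteSpace X]
    (U V : Submodule ℝ X) (hUc : IsClosed (U : Set X)) (hVc : IsClosed (V : Set X))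
    (hUV : U ⊓ V = ⊥) (hsum : IsClosed ((U ⊔ V : Submodule ℝ X) : Set X))
    (An Bn : ℕ → Set X)
    (hAn : ∀ n, (An n).Nonempty ∧ IsClosed (An n) ∧ Convex ℝ (An n))
    (hBn : ∀ n, (Bn n).Nonempty ∧ IsClosed (Bn n) ∧ Convex ℝ (Bn n))
    (hAW : AWTendsto An (U : Set X)) (hBW : AWTendsto Bn (V : Set X))
    (a₀ : X) (a b : ℕ → X) (hab : IsPerturbedAPS An Bn a₀ a b) :
    Filter.Tendsto a Filter.atTop (nhds (0 : X)) ∧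
      Filter.Tendsto b Filter.atTop (nhds (0 : X)) := by
  obtain ⟨c, hc0, hc1, hangUV⟩ :=
    exists_real_inner_le_mul_norm_mul_norm hUc hVc (disjoint_iff.2 hUV) hsum
  have hangVU : ∀ v ∈ V, ∀ u ∈ U, ⟪v, u⟫ ≤ c * (‖v‖ * ‖u‖) := fun v hv u hu => by
    rw [real_inner_comm, mul_comm ‖v‖]; exact hangUV u hu v hv
  have hclose : ∀ ε > 0, ∀ᶠ n in atTop,
      IsConicallyClose (An n) U ε ∧ IsConicallyClose (Bn n) V ε := fun ε hε =>
    (hAW.eventually_isConicallyClose (fun n => (hAn n).2.2) (fun n => (hAn n).1) hε).and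
      (hBW.eventually_isConicallyClose (fun n => (hBn n).2.2) (fun n => (hBn n).1) hε)
  have hstep : ∀ᶠ δ in 𝓝[>] 0, ∀ᶠ n in atTop, ‖b (n + 2)‖ ≤ (c + δ) * ‖a (n + 1)‖ + δ ∧
      ‖a (n + 2)‖ ≤ (c + δ) * ‖b (n + 2)‖ + δ := by
    filter_upwards [Ioc_mem_nhdsGT one_pos] with δ ⟨hδ0, hδ1⟩
    have hε := hclose (δ ^ 2 / 14) (by positivity)
    filter_upwards [(tendsto_add_atTop_nat 1).eventually hε,
      (tendsto_add_atTop_nat 2).eventually hε] with n hn₁ hn₂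
    obtain ⟨-, hproj⟩ := hab
    exact ⟨(hproj (n + 1)).1.norm_le_of_isConicallyClose hc0 hc1.le hδ0 hδ1 hangUV hn₁.1 hn₂.2
        (hBn _).2.2 (hproj n).2.1,
      (hproj (n + 1)).2.norm_le_of_isConicallyClose hc0 hc1.le hδ0 hδ1 hangVU hn₂.2 hn₂.1
        (hAn _).2.2 (hproj (n + 1)).1.1⟩
  obtain ⟨ha, hb⟩ := tendsto_zero_of_eventually_alternating (fun _ => norm_nonneg _)
    (fun _ => norm_nonneg _) hc0 hc1 hstep
  exact ⟨(tendsto_add_atTop_iff_nat 1).1 (tendsto_zero_iff_norm_tendsto_zero.2 ha),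
    (tendsto_add_atTop_iff_nat 2).1 (tendsto_zero_iff_norm_tendsto_zero.2 hb)⟩
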